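/- Let N ≥ 1, p > 1, 0 < γ < min{2, N}, μ a nonnegative Radon measure on ℝ^N and 0 < T ≤ ∞. Suppose there exists a supersolution v of the Hardy parabolic equation ∂_t v − Δv = |x|^{-γ} v^p with initial data μ on ℝ^N × [0,T), i.e., a nonnegative measurable function v on ℝ^N × (0,T) such that for almost every x ∈ ℝ^N and every t ∈ (0,T), v(x,t) ≥ ∫_{ℝ^N} G(x−y,t) dμ(y) + ∫_0^t ∫_{ℝ^N} G(x−y,t−s) |y|^{-γ} v(y,s)^p dy ds, with v(x,t) < ∞. Then there exists a solution of the Hardy parabolic equation with initial data μ on ℝ^N × [0,T). -/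

import Mathlib

open MeasureTheory Real
open scoped ENNReal NNReal

/-- The Gaussian heat kernel on `ℝ^N`. -/
noncomputable def G (N : ℕ) (x : EuclideanSpace ℝ (Fin N)) (t : ℝ) : ℝ :=
  (4 * Real.pi * t) ^ (-(N : ℝ) / 2) * Real.exp (-‖x‖ ^ 2 / (4 * t))

/-- The right-hand side of the Duhamel formulation of the Hardy parabolic equation
`∂_t u - Δu = |x|^{-γ} u^p` with a nonnegative Radon measure `μ` as initial data. -/
noncomputable def hardyRHS (N : ℕ) (p γ : ℝ) (μ : Measure (EuclideanSpace ℝ (Fin N)))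
    (u : EuclideanSpace ℝ (Fin N) → ℝ → ℝ) (x : EuclideanSpace ℝ (Fin N)) (t : ℝ) : ℝ≥0∞ :=
  (∫⁻ y, ENNReal.ofReal (G N (x - y) t) ∂μ) +
    ∫⁻ s in Set.Ioo (0 : ℝ) t,
      ∫⁻ y, ENNReal.ofReal (G N (x - y) (t - s) * ‖y‖ ^ (-γ) * u y s ^ p)

/-- `u` is a solution of the Hardy parabolic equation `∂_t u - Δu = |x|^{-γ} u^p`
with initial data the nonnegative Radon measure `μ` on `ℝ^N × [0,T)`. -/
def IsSolution (N : ℕ) (p γ : ℝ) (μ : Measure (EuclideanSpace ℝ (Fin N))) (T : ℝ)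
    (u : EuclideanSpace ℝ (Fin N) → ℝ → ℝ) : Prop :=
  Measurable (Function.uncurry u) ∧ (∀ x t, 0 ≤ u x t) ∧
    ∀ᵐ x ∂(volume : Measure (EuclideanSpace ℝ (Fin N))), ∀ t : ℝ, 0 < t → t < T →
      hardyRHS N p γ μ u x t ≠ ⊤ ∧ ENNReal.ofReal (u x t) = hardyRHS N p γ μ u x t

/-- `u` is a solution on `ℝ^N × [0,T)` where `T ∈ (0, ∞]` is an extended real. -/
def IsSolutionE (N : ℕ) (p γ : ℝ) (μ : Measure (EuclideanSpace ℝ (Fin N))) (T : ℝ≥0∞)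
    (u : EuclideanSpace ℝ (Fin N) → ℝ → ℝ) : Prop :=
  Measurable (Function.uncurry u) ∧ (∀ x t, 0 ≤ u x t) ∧
    ∀ᵐ x ∂(volume : Measure (EuclideanSpace ℝ (Fin N))), ∀ t : ℝ, 0 < t →
      ENNReal.ofReal t < T →
      hardyRHS N p γ μ u x t ≠ ⊤ ∧ ENNReal.ofReal (u x t) = hardyRHS N p γ μ u x t

/-! The minimal solution is obtained by monotone iteration. Working with `ℝ≥0∞`-valued functions,
the Duhamel map is monotone and commutes with suprema of increasing measurable sequences (monotone
convergence), so the supremum of its iterates from `0` is a measurable fixed point. By induction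
every iterate lies below the supersolution almost everywhere, hence so does the supremum, which is
therefore finite and can be read back as a real-valued solution. -/

lemma G_nonneg (N : ℕ) (x : EuclideanSpace ℝ (Fin N)) {t : ℝ} (ht : 0 < t) : 0 ≤ G N x t := by
  unfold G; positivity

@[fun_prop]
lemma measurable_G (N : ℕ) : Measurable fun q : EuclideanSpace ℝ (Fin N) × ℝ => G N q.1 q.2 := by
  unfold G; fun_prop

lemma ENNReal.iSup_rpow {ι : Sort*} {p : ℝ} (hp : 0 < p) (a : ι → ℝ≥0∞) :
    (⨆ i, a i) ^ p = ⨆ i, a i ^ p :=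
  (ENNReal.orderIsoRpow p hp).map_iSup a

/-- The map `hardyRHS` on `ℝ≥0∞`-valued functions, where it is monotone and can be iterated
without finiteness assumptions. -/
noncomputable def hardyDuhamel (N : ℕ) (p γ : ℝ) (μ : Measure (EuclideanSpace ℝ (Fin N)))
    (w : EuclideanSpace ℝ (Fin N) → ℝ → ℝ≥0∞) (x : EuclideanSpace ℝ (Fin N)) (t : ℝ) : ℝ≥0∞ :=
  (∫⁻ y, ENNReal.ofReal (G N (x - y) t) ∂μ) +
    ∫⁻ s in Set.Ioo (0 : ℝ) t, ∫⁻ y, ENNReal.ofReal (G N (x - y) (t - s) * ‖y‖ ^ (-γ)) * w y s ^ p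

section hardyDuhamel

variable {N : ℕ} {p γ : ℝ} {μ : Measure (EuclideanSpace ℝ (Fin N))}

lemma hardyRHS_eq_hardyDuhamel (hp : 0 ≤ p) {u : EuclideanSpace ℝ (Fin N) → ℝ → ℝ}
    (hu : ∀ y s, 0 ≤ u y s) (x : EuclideanSpace ℝ (Fin N)) (t : ℝ) :
    hardyRHS N p γ μ u x t = hardyDuhamel N p γ μ (fun y s => ENNReal.ofReal (u y s)) x t := by
  refine congrArg _ (setLIntegral_congr_fun measurableSet_Ioo fun s hs => ?_)
  refine lintegral_congr fun y => ?_
  have hG := G_nonneg N (x - y) (sub_pos.2 hs.2)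
  rw [ENNReal.ofReal_mul (by positivity), ENNReal.ofReal_rpow_of_nonneg (hu y s) hp]

lemma hardyDuhamel_mono_ae (hp : 0 ≤ p) {w w' : EuclideanSpace ℝ (Fin N) → ℝ → ℝ≥0∞}
    {x : EuclideanSpace ℝ (Fin N)} {t : ℝ}
    (h : ∀ᵐ y ∂(volume : Measure (EuclideanSpace ℝ (Fin N))),
      ∀ s ∈ Set.Ioo (0 : ℝ) t, w y s ≤ w' y s) :
    hardyDuhamel N p γ μ w x t ≤ hardyDuhamel N p γ μ w' x t := by
  refine add_le_add le_rfl (setLIntegral_mono' measurableSet_Ioo fun s hs => lintegral_mono_ae ?_)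
  filter_upwards [h] with y hy
  gcongr
  exact hy s hs

lemma hardyDuhamel_congr_ae (hp : 0 ≤ p) {w w' : EuclideanSpace ℝ (Fin N) → ℝ → ℝ≥0∞}
    {x : EuclideanSpace ℝ (Fin N)} {t : ℝ}
    (h : ∀ᵐ y ∂(volume : Measure (EuclideanSpace ℝ (Fin N))),
      ∀ s ∈ Set.Ioo (0 : ℝ) t, w y s = w' y s) :
    hardyDuhamel N p γ μ w x t = hardyDuhamel N p γ μ w' x t :=
  le_antisymm
    (hardyDuhamel_mono_ae hp (h.mono fun _ hy s hs => (hy s hs).le))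
    (hardyDuhamel_mono_ae hp (h.mono fun _ hy s hs => (hy s hs).ge))

lemma monotone_hardyDuhamel (hp : 0 ≤ p) : Monotone (hardyDuhamel N p γ μ) :=
  fun _ _ h _ _ => hardyDuhamel_mono_ae hp (.of_forall fun y s _ => h y s)

lemma measurable_hardyDuhamel [SFinite μ] {w : EuclideanSpace ℝ (Fin N) → ℝ → ℝ≥0∞}
    (hw : Measurable (Function.uncurry w)) :
    Measurable (Function.uncurry (hardyDuhamel N p γ μ w)) := by
  refine Measurable.add ?_ ?_
  · exact Measurable.lintegral_prod_right'
      (f := fun q : (EuclideanSpace ℝ (Fin N) × ℝ) × EuclideanSpace ℝ (Fin N) =>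
        ENNReal.ofReal (G N (q.1.1 - q.2) q.1.2)) (by fun_prop)
  · simp_rw [← lintegral_indicator measurableSet_Ioo]
    refine Measurable.lintegral_prod_right'
      (f := fun q : (EuclideanSpace ℝ (Fin N) × ℝ) × ℝ => (Set.Ioo 0 q.1.2).indicator
        (fun s => ∫⁻ y, ENNReal.ofReal (G N (q.1.1 - y) (q.1.2 - s) * ‖y‖ ^ (-γ)) * w y s ^ p)
        q.2) ?_
    have hIoo : MeasurableSet {q : (EuclideanSpace ℝ (Fin N) × ℝ) × ℝ | q.2 ∈ Set.Ioo 0 q.1.2} :=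
      (measurableSet_lt measurable_const measurable_snd).inter
        (measurableSet_lt measurable_snd measurable_fst.snd)
    exact (Measurable.lintegral_prod_right'
      (f := fun q : ((EuclideanSpace ℝ (Fin N) × ℝ) × ℝ) × EuclideanSpace ℝ (Fin N) =>
        ENNReal.ofReal (G N (q.1.1.1 - q.2) (q.1.1.2 - q.1.2) * ‖q.2‖ ^ (-γ)) * w q.2 q.1.2 ^ p)
      (by fun_prop)).indicator hIoo

lemma hardyDuhamel_iSup (hp : 0 < p) {w : ℕ → EuclideanSpace ℝ (Fin N) → ℝ → ℝ≥0∞}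
    (hwm : ∀ n, Measurable (Function.uncurry (w n))) (hmono : Monotone w) :
    hardyDuhamel N p γ μ (⨆ n, w n) = ⨆ n, hardyDuhamel N p γ μ (w n) := by
  ext x t
  simp only [iSup_apply, hardyDuhamel, ← ENNReal.add_iSup]
  congr 1
  have hmono' : ∀ s, Monotone fun n y =>
      ENNReal.ofReal (G N (x - y) (t - s) * ‖y‖ ^ (-γ)) * w n y s ^ p :=
    fun s m n hmn y => by beta_reduce; gcongr; exact hmono hmn y s
  rw [← lintegral_iSup ?_ fun m n hmn s => lintegral_mono (hmono' s hmn)]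
  · refine lintegral_congr fun s => ?_
    rw [← lintegral_iSup ?_ (hmono' s)]
    · simp only [ENNReal.iSup_rpow hp, ENNReal.mul_iSup]
    · intro n
      fun_prop
  · intro n
    exact Measurable.lintegral_prod_right'
      (f := fun q : ℝ × EuclideanSpace ℝ (Fin N) =>
        ENNReal.ofReal (G N (x - q.2) (t - q.1) * ‖q.2‖ ^ (-γ)) * w n q.2 q.1 ^ p)
      (by fun_prop)

end hardyDuhamel

noncomputable def hardyMinimal (N : ℕ) (p γ : ℝ) (μ : Measure (EuclideanSpace ℝ (Fin N))) :
    EuclideanSpace ℝ (Fin N) → ℝ → ℝ≥0∞ :=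
  ⨆ n, (hardyDuhamel N p γ μ)^[n] 0

section hardyMinimal

variable {N : ℕ} {p γ : ℝ} {μ : Measure (EuclideanSpace ℝ (Fin N))}

lemma monotone_iterate_hardyDuhamel (hp : 0 ≤ p) :
    Monotone fun n => (hardyDuhamel N p γ μ)^[n] 0 :=
  (monotone_hardyDuhamel hp).monotone_iterate_of_le_map zero_le

lemma measurable_iterate_hardyDuhamel [SFinite μ] (n : ℕ) :
    Measurable (Function.uncurry ((hardyDuhamel N p γ μ)^[n] 0)) := by
  induction n with
  | zero => exact measurable_const
  | succ n ih =>
    rw [Function.iterate_succ_apply']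
    exact measurable_hardyDuhamel ih

lemma measurable_hardyMinimal [SFinite μ] :
    Measurable (Function.uncurry (hardyMinimal N p γ μ)) := by
  simp only [hardyMinimal, Function.uncurry_def, iSup_apply]
  exact Measurable.iSup fun n => measurable_iterate_hardyDuhamel n

lemma hardyDuhamel_hardyMinimal [SFinite μ] (hp : 0 < p) :
    hardyDuhamel N p γ μ (hardyMinimal N p γ μ) = hardyMinimal N p γ μ := by
  rw [hardyMinimal, hardyDuhamel_iSup hp measurable_iterate_hardyDuhamel
    (monotone_iterate_hardyDuhamel hp.le)]
  simp only [← Function.iterate_succ_apply' (hardyDuhamel N p γ μ)]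
  exact (monotone_iterate_hardyDuhamel hp.le).iSup_nat_add 1

lemma hardyMinimal_le_of_supersolution (hp : 0 ≤ p) {T : ℝ≥0∞}
    {w : EuclideanSpace ℝ (Fin N) → ℝ → ℝ≥0∞}
    (hw : ∀ᵐ x ∂(volume : Measure (EuclideanSpace ℝ (Fin N))), ∀ t : ℝ, 0 < t →
      ENNReal.ofReal t < T → hardyDuhamel N p γ μ w x t ≤ w x t) :
    ∀ᵐ x ∂(volume : Measure (EuclideanSpace ℝ (Fin N))), ∀ t : ℝ, 0 < t →
      ENNReal.ofReal t < T → hardyMinimal N p γ μ x t ≤ w x t := by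
  have hiter : ∀ n, ∀ᵐ x ∂(volume : Measure (EuclideanSpace ℝ (Fin N))), ∀ t : ℝ, 0 < t →
      ENNReal.ofReal t < T → (hardyDuhamel N p γ μ)^[n] 0 x t ≤ w x t := by
    intro n
    induction n with
    | zero => exact .of_forall fun _ _ _ _ => zero_le
    | succ n ih =>
      filter_upwards [hw] with x hx t ht htT
      rw [Function.iterate_succ_apply']
      refine le_trans (hardyDuhamel_mono_ae hp ?_) (hx t ht htT)
      filter_upwards [ih] with y hy s hs
      exact hy s hs.1 ((ENNReal.ofReal_le_ofReal hs.2.le).trans_lt htT)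
  filter_upwards [ae_all_iff.2 hiter] with x hx t ht htT
  simpa only [hardyMinimal, iSup_apply] using iSup_le fun n => hx n t ht htT

end hardyMinimal

lemma isSolutionE_toReal_of_hardyDuhamel_eq {N : ℕ} {p γ : ℝ} (hp : 0 ≤ p)
    {μ : Measure (EuclideanSpace ℝ (Fin N))} {T : ℝ≥0∞}
    {w : EuclideanSpace ℝ (Fin N) → ℝ → ℝ≥0∞} (hwm : Measurable (Function.uncurry w))
    (hfix : hardyDuhamel N p γ μ w = w)
    (hfin : ∀ᵐ x ∂(volume : Measure (EuclideanSpace ℝ (Fin N))), ∀ t : ℝ, 0 < t →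
      ENNReal.ofReal t < T → w x t ≠ ⊤) :
    IsSolutionE N p γ μ T fun x t => (w x t).toReal := by
  refine ⟨ENNReal.measurable_toReal.comp hwm, fun _ _ => ENNReal.toReal_nonneg, ?_⟩
  filter_upwards [hfin] with x hx t ht htT
  have hrhs : hardyRHS N p γ μ (fun x t => (w x t).toReal) x t = w x t := by
    rw [hardyRHS_eq_hardyDuhamel hp (fun _ _ => ENNReal.toReal_nonneg)]
    conv_rhs => rw [← hfix]
    refine hardyDuhamel_congr_ae hp ?_
    filter_upwards [hfin] with y hy s hs
    exact ENNReal.ofReal_toReal (hy s hs.1 ((ENNReal.ofReal_le_ofReal hs.2.le).trans_lt htT))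
  rw [hrhs, ENNReal.ofReal_toReal (hx t ht htT)]
  exact ⟨hx t ht htT, rfl⟩

theorem statement9_general (N : ℕ) (p γ : ℝ) (hp : 1 < p)
    (μ : Measure (EuclideanSpace ℝ (Fin N))) (hμ : IsLocallyFiniteMeasure μ)
    (T : ℝ≥0∞)
    (v : EuclideanSpace ℝ (Fin N) → ℝ → ℝ)
    (hv0 : ∀ x t, 0 ≤ v x t)
    (hv : ∀ᵐ x ∂(volume : Measure (EuclideanSpace ℝ (Fin N))), ∀ t : ℝ, 0 < t →
        ENNReal.ofReal t < T →
        hardyRHS N p γ μ v x t ≤ ENNReal.ofReal (v x t)) :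
    ∃ u : EuclideanSpace ℝ (Fin N) → ℝ → ℝ, IsSolutionE N p γ μ T u := by
  have hp0 : 0 ≤ p := by linarith
  have hsuper : ∀ᵐ x ∂(volume : Measure (EuclideanSpace ℝ (Fin N))), ∀ t : ℝ, 0 < t →
      ENNReal.ofReal t < T →
      hardyDuhamel N p γ μ (fun y s => ENNReal.ofReal (v y s)) x t ≤ ENNReal.ofReal (v x t) := by
    filter_upwards [hv] with x hx t ht htT
    rw [← hardyRHS_eq_hardyDuhamel hp0 hv0]
    exact hx t ht htT
  refine ⟨_, isSolutionE_toReal_of_hardyDuhamel_eq hp0 measurable_hardyMinimal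
    (hardyDuhamel_hardyMinimal (by linarith)) ?_⟩
  filter_upwards [hardyMinimal_le_of_supersolution hp0 hsuper] with x hx t ht htT
  exact ((hx t ht htT).trans_lt ENNReal.ofReal_lt_top).ne

/-- Lemma 2.2, case θ = 2. If the Hardy parabolic equation with initial
data `μ` admits a supersolution on `ℝ^N × [0,T)`, `0 < T ≤ ∞`, then it admits a solution
on `ℝ^N × [0,T)`. -/
theorem statement9 (N : ℕ) (hN : 1 ≤ N) (p γ : ℝ) (hp : 1 < p)
    (hγ0 : 0 < γ) (hγ2 : γ < 2) (hγN : γ < N)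
    (μ : Measure (EuclideanSpace ℝ (Fin N))) (hμ : IsLocallyFiniteMeasure μ)
    (T : ℝ≥0∞) (hT : 0 < T)
    (v : EuclideanSpace ℝ (Fin N) → ℝ → ℝ) (hvm : Measurable (Function.uncurry v))
    (hv0 : ∀ x t, 0 ≤ v x t)
    (hv : ∀ᵐ x ∂(volume : Measure (EuclideanSpace ℝ (Fin N))), ∀ t : ℝ, 0 < t →
        ENNReal.ofReal t < T →
        hardyRHS N p γ μ v x t ≤ ENNReal.ofReal (v x t)) :
    ∃ u : EuclideanSpace ℝ (Fin N) → ℝ → ℝ, IsSolutionE N p γ μ T u :=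
  statement9_general N p γ hp μ hμ T v hv0 hv
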